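/- Let H be a subgroupoid of a groupoid G with the same unit space, and let F : H → ℂ be a positive definite function on H (for every unit x and γ₁,…,γ_n ∈ H^x, the matrix [F(γ_i⁻¹γ_j)] is positive semidefinite). Extend F to G by setting F(γ) = 0 for γ ∉ H. Then F is positive definite on G. -/
import Mathlib


open MeasureTheory ENNReal Filter Topology
open scoped ComplexOrder

/-- A discrete (countable) groupoid, given algebraically: a type `E` of arrows over a
unit space `X`, with range `r`, source `s`, a (total) partial multiplication `mul`
(only constrained on composable pairs), inversion, and countable source fibres. -/
structure CountableGroupoid where
  E : Type
  X : Type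
  r : E → X
  s : E → X
  unit : X → E
  mul : E → E → E
  inv : E → E
  r_unit : ∀ x, r (unit x) = x
  s_unit : ∀ x, s (unit x) = x
  mul_assoc' : ∀ a b c, s a = r b → s b = r c → mul (mul a b) c = mul a (mul b c)
  r_mul : ∀ a b, s a = r b → r (mul a b) = r a
  s_mul : ∀ a b, s a = r b → s (mul a b) = s b
  unit_mul : ∀ a, mul (unit (r a)) a = a
  mul_unit : ∀ a, mul a (unit (s a)) = a
  r_inv : ∀ a, r (inv a) = s a
  s_inv : ∀ a, s (inv a) = r a
  mul_inv : ∀ a, mul a (inv a) = unit (r a)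
  inv_mul : ∀ a, mul (inv a) a = unit (s a)
  countable_fibers : ∀ x, {γ : E | s γ = x}.Countable

namespace CountableGroupoid

variable (G : CountableGroupoid)

/-- Sum of a nonnegative function over the source fibre `G_x = s⁻¹(x)`. -/
noncomputable def sFiberSum (f : G.E → ℝ≥0∞) (x : G.X) : ℝ≥0∞ :=
  ∑' γ : {γ : G.E // G.s γ = x}, f γ.1

/-- Sum of a nonnegative function over the range fibre `G^x = r⁻¹(x)`. -/
noncomputable def rFiberSum (f : G.E → ℝ≥0∞) (x : G.X) : ℝ≥0∞ :=
  ∑' γ : {γ : G.E // G.r γ = x}, f γ.1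

/-- The `I`-norm : `max (ess sup_x Σ_{r γ = x} |f γ|, ess sup_x Σ_{s γ = x} |f γ|)`. -/
noncomputable def Inorm [MeasurableSpace G.X] (μ : Measure G.X) (f : G.E → ℂ) : ℝ≥0∞ :=
  max (essSup (fun x => G.rFiberSum (fun γ => (‖f γ‖₊ : ℝ≥0∞)) x) μ)
      (essSup (fun x => G.sFiberSum (fun γ => (‖f γ‖₊ : ℝ≥0∞)) x) μ)

/-- The factorizations `γ = γ₁ γ₂` of an arrow `γ`. -/
def Factorizations (γ : G.E) : Type :=
  {p : G.E × G.E // G.s p.1 = G.r p.2 ∧ G.mul p.1 p.2 = γ}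

/-- Convolution product `(f*g)(γ) = Σ_{γ₁γ₂ = γ} f(γ₁) g(γ₂)`. -/
noncomputable def conv (f g : G.E → ℂ) (γ : G.E) : ℂ :=
  ∑' p : G.Factorizations γ, f p.1.1 * g p.1.2

/-- Involution `f^*(γ) = conj (f (γ⁻¹))`. -/
noncomputable def starF (f : G.E → ℂ) (γ : G.E) : ℂ := (starRingEnd ℂ) (f (G.inv γ))

/-- The measure `ν` on `G` induced by `μ`: `ν(A) = ∫_X #(A ∩ s⁻¹ x) dμ(x)`. -/
noncomputable def nuSet [MeasurableSpace G.X] (μ : Measure G.X) (A : Set G.E) : ℝ≥0∞ :=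
  ∫⁻ x, (∑' _γ : ↥(A ∩ {γ : G.E | G.s γ = x}), (1 : ℝ≥0∞)) ∂μ

/-- Positive definiteness of a function on a groupoid. -/
def IsPosDef (F : G.E → ℂ) : Prop :=
  ∀ (x : G.X) (n : ℕ) (γ : Fin n → G.E), (∀ i, G.r (γ i) = x) →
    ∀ lam : Fin n → ℂ,
      0 ≤ ∑ i, ∑ j, lam i * (starRingEnd ℂ) (lam j) * F (G.mul (G.inv (γ i)) (γ j))

/-- Real conditionally negative definite functions on a groupoid. -/
def IsCondNegDef (ψ : G.E → ℝ) : Prop :=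
  (∀ x, ψ (G.unit x) = 0) ∧ (∀ γ, ψ (G.inv γ) = ψ γ) ∧
  (∀ (x : G.X) (n : ℕ) (γ : Fin n → G.E), (∀ i, G.r (γ i) = x) →
    ∀ lam : Fin n → ℝ, (∑ i, lam i) = 0 →
      (∑ i, ∑ j, lam i * lam j * ψ (G.mul (G.inv (γ i)) (γ j))) ≤ 0)

/-- `Q^n` : products of `n` elements of `Q` (with `Q^0` the units). -/
def Qpow (Q : Set G.E) : ℕ → Set G.E
  | 0 => Set.range G.unit
  | n+1 => {γ : G.E | ∃ a ∈ Q, ∃ b ∈ Qpow Q n, G.s a = G.r b ∧ γ = G.mul a b}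

/-- A reduced composable chain of elements of `Q` (no backtracking). -/
def IsReducedChain (Q : Set G.E) : List G.E → Prop
  | [] => True
  | [a] => a ∈ Q
  | a :: b :: l => a ∈ Q ∧ G.s a = G.r b ∧ b ≠ G.inv a ∧ IsReducedChain Q (b :: l)

/-- A treeing: a symmetric generating set disjoint from the units such that each fibre
graph is a tree (no nontrivial reduced loops). -/
def IsTreeing (Q : Set G.E) : Prop :=
  (∀ γ ∈ Q, G.inv γ ∈ Q) ∧
  (∀ x, G.unit x ∉ Q) ∧
  (∀ γ : G.E, ∃ n, γ ∈ G.Qpow Q n) ∧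
  (∀ (a : G.E) (l : List G.E), G.IsReducedChain Q (a :: l) →
      List.foldl G.mul a l ≠ G.unit (G.r a))

/-- The length function `ψ(γ) = d_{r γ}(r γ, γ) = min {n | γ ∈ Q^n}`. -/
noncomputable def treeDist (Q : Set G.E) (γ : G.E) : ℝ :=
  ((sInf {n : ℕ | γ ∈ G.Qpow Q n} : ℕ) : ℝ)

/-- The `A = L^∞(X)`-valued inner product `⟨ξ,η⟩_A(x) = Σ_{s γ = x} conj (ξ γ) η γ`. -/
noncomputable def innerA (ξ η : G.E → ℂ) (x : G.X) : ℂ :=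
  ∑' γ : {γ : G.E // G.s γ = x}, (starRingEnd ℂ) (ξ γ.1) * η γ.1

/-- The Haagerup property for a countable measured groupoid. -/
def HaagerupProperty [MeasurableSpace G.X] (μ : Measure G.X) : Prop :=
  ∃ F : ℕ → G.E → ℂ,
    (∀ n, G.IsPosDef (F n)) ∧
    (∀ n, ∀ᵐ x ∂μ, F n (G.unit x) = 1) ∧
    (∀ n, ∀ ε : ℝ, 0 < ε → G.nuSet μ {γ : G.E | ε < ‖F n γ‖} < ⊤) ∧
    G.nuSet μ {γ : G.E | ¬ Tendsto (fun n => F n γ) atTop (nhds (1 : ℂ))} = 0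

end CountableGroupoid

namespace CountableGroupoid

variable (G : CountableGroupoid)

lemma inv_unique' (m x : G.E) (hr : G.r x = G.s m)
    (h : G.mul m x = G.unit (G.r m)) : x = G.inv m := by
  have h1 : G.mul (G.mul (G.inv m) m) x = G.mul (G.inv m) (G.mul m x) :=
    G.mul_assoc' _ _ _ (by rw [G.s_inv]) hr.symm
  have l : G.mul (G.unit (G.s m)) x = x := by rw [← hr]; exact G.unit_mul x
  have rr : G.mul (G.inv m) (G.unit (G.r m)) = G.inv m := by
    conv_lhs => rw [← G.s_inv m]
    exact G.mul_unit _
  rw [G.inv_mul, h, l, rr] at h1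
  exact h1

lemma inv_inv' (a : G.E) : G.inv (G.inv a) = a := by
  refine (G.inv_unique' (G.inv a) a (by rw [G.s_inv]) ?_).symm
  rw [G.inv_mul, G.r_inv]

lemma inv_mul_rev (a b : G.E) (hab : G.s a = G.r b) :
    G.inv (G.mul a b) = G.mul (G.inv b) (G.inv a) := by
  refine (G.inv_unique' (G.mul a b) (G.mul (G.inv b) (G.inv a)) ?_ ?_).symm
  · rw [G.r_mul _ _ (by rw [G.s_inv, G.r_inv, hab]), G.r_inv, G.s_mul _ _ hab]
  · have h1 : G.mul (G.mul a b) (G.mul (G.inv b) (G.inv a)) =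
        G.mul (G.mul (G.mul a b) (G.inv b)) (G.inv a) :=
      (G.mul_assoc' _ _ _ (by rw [G.s_mul _ _ hab, G.r_inv])
        (by rw [G.s_inv, G.r_inv, hab])).symm
    have h2 : G.mul (G.mul a b) (G.inv b) = a := by
      rw [G.mul_assoc' _ _ _ hab (by rw [G.r_inv]), G.mul_inv, ← hab, G.mul_unit]
    rw [h1, h2, G.mul_inv, G.r_mul _ _ hab]

lemma mul_cancel_mid (g a b : G.E) (hag : G.r a = G.r g)
    (hbg : G.r b = G.r g) :
    G.mul (G.mul (G.inv a) g) (G.mul (G.inv g) b) = G.mul (G.inv a) b := by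
  have hcomp1 : G.s (G.inv a) = G.r g := by rw [G.s_inv, hag]
  have hcomp2 : G.s g = G.r (G.mul (G.inv g) b) := by
    rw [G.r_mul _ _ (by rw [G.s_inv, hbg]), G.r_inv]
  rw [G.mul_assoc' _ _ _ hcomp1 hcomp2]
  congr 1
  rw [← G.mul_assoc' _ _ _ ((G.r_inv g).symm) (by rw [G.s_inv, hbg]), G.mul_inv, ← hbg,
    G.unit_mul]

lemma key (g a b : G.E) (hag : G.r a = G.r g) (hbg : G.r b = G.r g) :
    G.mul (G.inv (G.mul (G.inv g) a)) (G.mul (G.inv g) b) = G.mul (G.inv a) b := by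
  rw [G.inv_mul_rev _ _ (by rw [G.s_inv, hag]), G.inv_inv', G.mul_cancel_mid g a b hag hbg]

end CountableGroupoid

/-- extending a positive definite function on a subgroupoid `H ⊆ G`
(same units) by `0` outside `H` yields a positive definite function on `G`. -/
theorem posdef_extension (G : CountableGroupoid) (H : Set G.E)
    (hunit : ∀ x : G.X, G.unit x ∈ H)
    (hmul : ∀ a b : G.E, a ∈ H → b ∈ H → G.s a = G.r b → G.mul a b ∈ H)
    (hinv : ∀ a ∈ H, G.inv a ∈ H)
    (F : G.E → ℂ) (hF0 : ∀ γ, γ ∉ H → F γ = 0)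
    (hpd : ∀ (x : G.X) (n : ℕ) (γ : Fin n → G.E),
      (∀ i, G.r (γ i) = x ∧ γ i ∈ H) → ∀ lam : Fin n → ℂ,
      0 ≤ ∑ i, ∑ j, lam i * (starRingEnd ℂ) (lam j) * F (G.mul (G.inv (γ i)) (γ j))) :
    G.IsPosDef F := by
  classical
  intro x n γ hr lam
  set a : Fin n → Fin n → ℂ :=
    fun i j => lam i * (starRingEnd ℂ) (lam j) * F (G.mul (G.inv (γ i)) (γ j)) with ha
  have hs : ∀ i j : Fin n, G.s (G.inv (γ i)) = G.r (γ j) := fun i j => by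
    rw [G.s_inv, hr i, hr j]
  -- the relation "i ~ j iff γ_i⁻¹ γ_j ∈ H" is an equivalence relation
  have hrefl : ∀ i, G.mul (G.inv (γ i)) (γ i) ∈ H := fun i => by
    rw [G.inv_mul]; exact hunit _
  have hsymm : ∀ i j, G.mul (G.inv (γ i)) (γ j) ∈ H → G.mul (G.inv (γ j)) (γ i) ∈ H := by
    intro i j h
    have h2 := hinv _ h
    rwa [G.inv_mul_rev _ _ (hs i j), G.inv_inv'] at h2
  have htrans : ∀ i j k, G.mul (G.inv (γ i)) (γ j) ∈ H → G.mul (G.inv (γ j)) (γ k) ∈ H →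
      G.mul (G.inv (γ i)) (γ k) ∈ H := by
    intro i j k h1 h2
    have h3 := hmul _ _ h1 h2
      (by rw [G.s_mul _ _ (hs i j), G.r_mul _ _ (hs j k), G.r_inv])
    rwa [G.mul_cancel_mid (γ j) (γ i) (γ k) (by rw [hr i, hr j]) (by rw [hr k, hr j])] at h3
  let st : Setoid (Fin n) :=
    ⟨fun i j => G.mul (G.inv (γ i)) (γ j) ∈ H,
      ⟨hrefl, fun {i j} h => hsymm i j h, fun {i j k} h1 h2 => htrans i j k h1 h2⟩⟩
  let q : Fin n → Quotient st := Quotient.mk st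
  have hzero : ∀ i j, q j ≠ q i → a i j = 0 := by
    intro i j hij
    have : G.mul (G.inv (γ i)) (γ j) ∉ H := fun h => hij (Quotient.sound (hsymm i j h))
    simp [ha, hF0 _ this]
  have step1 : ∀ i, ∑ j, a i j = ∑ j ∈ Finset.univ.filter (fun j => q j = q i), a i j := by
    intro i
    rw [Finset.sum_filter]
    refine Finset.sum_congr rfl fun j _ => ?_
    by_cases h : q j = q i
    · rw [if_pos h]
    · rw [if_neg h, hzero i j h]
  have step2 : ∑ i, ∑ j, a i j =
      ∑ c : Quotient st, ∑ i ∈ Finset.univ.filter (fun i => q i = c),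
        ∑ j ∈ Finset.univ.filter (fun j => q j = c), a i j := by
    rw [← Finset.sum_fiberwise Finset.univ q (fun i => ∑ j, a i j)]
    refine Finset.sum_congr rfl fun c _ => Finset.sum_congr rfl fun i hi => ?_
    rw [step1 i]
    simp only [Finset.mem_filter] at hi
    rw [hi.2]
  rw [step2]
  refine Finset.sum_nonneg fun c _ => ?_
  set sc := Finset.univ.filter (fun i => q i = c) with hsc
  rcases sc.eq_empty_or_nonempty with h | ⟨i₀, hi₀⟩
  · rw [h]; simp
  have hi₀c : q i₀ = c := (Finset.mem_filter.mp hi₀).2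
  have hrelsc : ∀ i ∈ sc, G.mul (G.inv (γ i₀)) (γ i) ∈ H := by
    intro i hi
    exact Quotient.exact (hi₀c.trans (Finset.mem_filter.mp hi).2.symm)
  set m := sc.card with hm
  let ee : Fin m ≃ {i // i ∈ sc} := sc.equivFin.symm
  let δ : Fin m → G.E := fun k => G.mul (G.inv (γ i₀)) (γ (ee k).1)
  have hδ : ∀ k, G.r (δ k) = G.s (γ i₀) ∧ δ k ∈ H := by
    intro k
    refine ⟨?_, hrelsc _ (ee k).2⟩
    rw [G.r_mul _ _ (hs i₀ (ee k).1), G.r_inv]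
  have hpd' := hpd (G.s (γ i₀)) m δ hδ (fun k => lam (ee k).1)
  have harg : ∀ k l : Fin m, G.mul (G.inv (δ k)) (δ l) =
      G.mul (G.inv (γ (ee k).1)) (γ (ee l).1) := by
    intro k l
    exact G.key (γ i₀) (γ (ee k).1) (γ (ee l).1)
      (by rw [hr, hr]) (by rw [hr, hr])
  have hsum : ∑ i ∈ sc, ∑ j ∈ sc, a i j =
      ∑ k : Fin m, ∑ l : Fin m, (fun k => lam (ee k).1) k *
        (starRingEnd ℂ) ((fun k => lam (ee k).1) l) * F (G.mul (G.inv (δ k)) (δ l)) := by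
    rw [← Finset.sum_coe_sort sc, ← Equiv.sum_comp ee (fun i : {i // i ∈ sc} => ∑ j ∈ sc, a i.1 j)]
    refine Finset.sum_congr rfl fun k _ => ?_
    rw [← Finset.sum_coe_sort sc, ← Equiv.sum_comp ee (fun j : {j // j ∈ sc} => a (ee k).1 j.1)]
    refine Finset.sum_congr rfl fun l _ => ?_
    rw [harg k l]
  rw [hsum]
  exact hpd'
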